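/- arXiv:1912.05253 — 3 statements merged into one kernel-verified Lean document; each statement's English description precedes it below -/
import Mathlib

section
/- For every n ≥ 0 and k > 2, the length of the finite k-bonacci word W_n^(k) equals the (n+k)-th k-bonacci number f_{n+k}^(k). -/
def kbon (k : ℕ) (n : ℕ) : ℕ :=
  if _h1 : n < k - 1 then 0
  else if _h2 : n = k - 1 then 1
  else ∑ i ∈ Finset.range k, kbon k (n - i - 1)
termination_by n
decreasing_by omega

/-- The k-bonacci morphism on words over ℕ. -/
def phiW (k : ℕ) (w : List ℕ) : List ℕ :=
  w.flatMap (fun a => if a % k = k - 1 then [a + 1] else [k * (a / k), a + 1])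

/-- The finite k-bonacci word over the infinite alphabet ℕ. -/
def W (k n : ℕ) : List ℕ := (phiW k)^[n] [0]

/-!
Count the letters of a word by residue modulo `k`. The morphism `φ_k` sends a letter of residue
`j < k - 1` to one letter of residue `0` and one of residue `j + 1`, and a letter of residue `k - 1`
to a single letter of residue `0`. Hence the residue-`0` count of `φ_k(w)` is `|w|`, and the
residue-`(j + 1)` count of `φ_k(w)` is the residue-`j` count of `w`. By induction, `W_n` has
`f_{n+k-1-j}` letters of residue `j`, and `|W_n|`, the residue-`0` count of `W_{n+1}`, is `f_{n+k}`.
-/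

open Finset

lemma kbon_of_lt {k n : ℕ} (hn : n < k - 1) : kbon k n = 0 := by
  rw [kbon, dif_pos hn]

lemma kbon_sub_one (k : ℕ) : kbon k (k - 1) = 1 := by
  rw [kbon, dif_neg (lt_irrefl _), dif_pos rfl]

lemma kbon_eq_sum {k n : ℕ} (hn : k - 1 < n) :
    kbon k n = ∑ i ∈ range k, kbon k (n - i - 1) := by
  rw [kbon, dif_neg (by omega), dif_neg (by omega)]

lemma Nat.add_one_mod_of_mod_eq_sub_one {a k : ℕ} (hk : 0 < k) (h : a % k = k - 1) :
    (a + 1) % k = 0 := by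
  rw [← Nat.mod_add_mod, h, Nat.sub_add_cancel hk, Nat.mod_self]

lemma Nat.add_one_mod_of_mod_ne_sub_one {a k : ℕ} (h : a % k ≠ k - 1) :
    (a + 1) % k = a % k + 1 := by
  rcases Nat.eq_zero_or_pos k with rfl | hk
  · simp
  have := Nat.mod_lt a hk
  rw [← Nat.mod_add_mod, Nat.mod_eq_of_lt (by omega)]

def residueCount (k j : ℕ) (w : List ℕ) : ℕ := w.countP (· % k = j)

lemma residueCount_append (k j : ℕ) (u v : List ℕ) :
    residueCount k j (u ++ v) = residueCount k j u + residueCount k j v :=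
  List.countP_append

lemma sum_residueCount {k : ℕ} (hk : 0 < k) (w : List ℕ) :
    ∑ j ∈ range k, residueCount k j w = w.length := by
  induction w with
  | nil => simp [residueCount]
  | cons a w ih =>
    simp only [residueCount] at ih
    simp [residueCount, List.countP_cons, sum_add_distrib, ih, Nat.mod_lt a hk]

lemma phiW_cons (k a : ℕ) (w : List ℕ) : phiW k (a :: w) = phiW k [a] ++ phiW k w := by
  simp [phiW]

lemma W_succ (k n : ℕ) : W k (n + 1) = phiW k (W k n) :=
  Function.iterate_succ_apply' _ _ _

lemma residueCount_zero_phiW_singleton {k : ℕ} (hk : 0 < k) (a : ℕ) :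
    residueCount k 0 (phiW k [a]) = 1 := by
  by_cases h : a % k = k - 1
  · simp [phiW, residueCount, h, Nat.add_one_mod_of_mod_eq_sub_one hk h]
  · simp [phiW, residueCount, h, Nat.add_one_mod_of_mod_ne_sub_one h, Nat.mul_mod_right]

lemma residueCount_succ_phiW_singleton {k j : ℕ} (hj : j + 1 < k) (a : ℕ) :
    residueCount k (j + 1) (phiW k [a]) = residueCount k j [a] := by
  by_cases h : a % k = k - 1
  · simp [phiW, residueCount, h, Nat.add_one_mod_of_mod_eq_sub_one (by omega : 0 < k) h,
      show k - 1 ≠ j by omega]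
  · simp [phiW, residueCount, h, Nat.add_one_mod_of_mod_ne_sub_one h, Nat.mul_mod_right]

lemma residueCount_zero_phiW {k : ℕ} (hk : 0 < k) (w : List ℕ) :
    residueCount k 0 (phiW k w) = w.length := by
  induction w with
  | nil => rfl
  | cons a w ih =>
    rw [phiW_cons, residueCount_append, residueCount_zero_phiW_singleton hk, ih, List.length_cons,
      add_comm]

lemma residueCount_succ_phiW {k j : ℕ} (hj : j + 1 < k) (w : List ℕ) :
    residueCount k (j + 1) (phiW k w) = residueCount k j w := by
  induction w with
  | nil => rfl
  | cons a w ih =>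
    rw [phiW_cons, residueCount_append, residueCount_succ_phiW_singleton hj, ih,
      ← residueCount_append, List.singleton_append]

lemma residueCount_W {k j : ℕ} (hj : j < k) (n : ℕ) :
    residueCount k j (W k n) = kbon k (n + k - 1 - j) := by
  induction n generalizing j with
  | zero =>
    rcases j with _ | j
    · simp [W, residueCount, kbon_sub_one]
    · rw [kbon_of_lt (by omega)]
      simp [W, residueCount]
  | succ n ih =>
    rw [W_succ]
    rcases j with _ | j
    · rw [residueCount_zero_phiW hj, ← sum_residueCount hj, kbon_eq_sum (by omega)]
      refine sum_congr rfl fun i hi => ?_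
      rw [ih (mem_range.mp hi)]
      congr 1
      omega
    · rw [residueCount_succ_phiW hj, ih (by omega)]
      congr 1
      omega

theorem length_W_eq_kbon (k n : ℕ) (hk : 2 < k) :
    (W k n).length = kbon k (n + k) := by
  have hk₀ : 0 < k := by omega
  calc (W k n).length = residueCount k 0 (W k (n + 1)) := by
        rw [W_succ, residueCount_zero_phiW hk₀]
    _ = kbon k (n + 1 + k - 1 - 0) := residueCount_W hk₀ (n + 1)
    _ = kbon k (n + k) := by
        congr 1
        omega
end

section
/- For all nonnegative integers i and n, the word ki ⊕ W_n^(k) (the word obtained by adding ki to each digit of W_n^(k)) is a factor of W_{n+ki}^(k). -/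
theorem W_add (k m n : ℕ) : W k (m + n) = (phiW k)^[m] (W k n) :=
  Function.iterate_add_apply _ m n [0]

theorem phiW_append (k : ℕ) (u v : List ℕ) : phiW k (u ++ v) = phiW k u ++ phiW k v :=
  List.flatMap_append

theorem infix_phiW (k : ℕ) {u v : List ℕ} (h : u <:+: v) : phiW k u <:+: phiW k v := by
  obtain ⟨s, t, rfl⟩ := h
  exact ⟨phiW k s, phiW k t, by simp only [phiW_append]⟩

theorem infix_iterate_phiW (k n : ℕ) {u v : List ℕ} (h : u <:+: v) :
    (phiW k)^[n] u <:+: (phiW k)^[n] v := by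
  induction n with
  | zero => exact h
  | succ n ih =>
    simp only [Function.iterate_succ_apply']
    exact infix_phiW k ih

theorem singleton_succ_infix_phiW (k a : ℕ) : [a + 1] <:+: phiW k [a] := by
  by_cases h : a % k = k - 1
  · simp [phiW, h]
  · simpa [phiW, h] using List.suffix_cons (k * (a / k)) [a + 1] |>.isInfix

theorem singleton_infix_W (k j : ℕ) : [j] <:+: W k j := by
  induction j with
  | zero => exact List.infix_refl _
  | succ j ih =>
    rw [W, Function.iterate_succ_apply']
    exact (singleton_succ_infix_phiW k j).trans (infix_phiW k ih)

theorem phiW_commute_map_add_mul (k m : ℕ) : Function.Commute (phiW k) (List.map (· + k * m)) := by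
  intro w
  rw [phiW, phiW, List.flatMap_map, List.map_flatMap]
  refine List.flatMap_congr fun a _ => ?_
  have hblock : k * ((a + k * m) / k) = k * (a / k) + k * m := by
    rcases k.eq_zero_or_pos with rfl | hk
    · simp
    · rw [Nat.add_mul_div_left a m hk, Nat.mul_add]
  rw [Nat.add_mul_mod_self_left, hblock]
  split_ifs <;> simp only [List.map_cons, List.map_nil, Nat.add_right_comm]

theorem oplus_ki_W_isInfix_general (k : ℕ) (i n : ℕ) :
    ((W k n).map (· + k * i)) <:+: W k (n + k * i) := by
  have hshift : (W k n).map (· + k * i) = (phiW k)^[n] [k * i] := by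
    simpa [W] using ((phiW_commute_map_add_mul k i).iterate_left n [0]).symm
  rw [hshift, W_add]
  exact infix_iterate_phiW k n (singleton_infix_W k (k * i))

theorem oplus_ki_W_isInfix (k : ℕ) (hk : 2 < k) (i n : ℕ) :
    ((W k n).map (· + k * i)) <:+: W k (n + k * i) :=
  oplus_ki_W_isInfix_general k i n
end

section
/- For any integers i and n with i < n and n ≥ k+1, the word W_n^(k) contains no factor of the form W_i^(k) W_i^(k). -/
/-!
Each block `phiW k [a]` begins with a multiple of `k`, and the second letter of a two-letter
block is not one. So the cuts between blocks of `phiW k w` are exactly the positions before a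
multiple of `k`, `phiW k` is injective, and an occurrence of `c :: (phiW k u ++ a :: _)` with
`k ∣ a` in `W k (n + 1)` comes from an occurrence of `(c - 1) :: (u ++ _)` in `W k n`.

Write `D i` for `W k i` without its last letter `i`. As `D (i + 1)` is `phiW k (D i)` followed
by at most one multiple of `k`, desubstitution lowers `i` and the letter in front of `D i`
together. By induction on `i`, no `W k n` contains `c :: D i ++ [b]` with `c, b ≤ i ≤ k - 2`
(for `i = 0` this is `[0, 0]`, impossible as `c - 1` would not exist), nor `c :: D i` with
`c ≤ i` and `k - 1 ≤ i`. But `W k i ++ W k i` contains `i :: D i ++ [i]`.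
-/

namespace KBonacci

variable {k : ℕ}

theorem succ_mod_eq_zero_iff (hk : 0 < k) {a : ℕ} : (a + 1) % k = 0 ↔ a % k = k - 1 := by
  have hlt := Nat.mod_lt a hk
  have hmod : (a + 1) % k = (a % k + 1) % k := by rw [Nat.add_mod, Nat.add_mod_mod]
  rcases (show a % k + 1 ≤ k from hlt).lt_or_eq with h | h
  · rw [hmod, Nat.mod_eq_of_lt h]; omega
  · rw [hmod, h, Nat.mod_self]; omega

@[simp] theorem phiW_nil : phiW k [] = [] := rfl

theorem phiW_cons (a : ℕ) (w : List ℕ) : phiW k (a :: w) = phiW k [a] ++ phiW k w := by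
  simp [phiW]

theorem phiW_append (u v : List ℕ) : phiW k (u ++ v) = phiW k u ++ phiW k v :=
  List.flatMap_append

theorem phiW_singleton_of_mod_eq {a : ℕ} (h : a % k = k - 1) : phiW k [a] = [a + 1] := by
  simp [phiW, h]

theorem phiW_singleton_of_mod_ne {a : ℕ} (h : a % k ≠ k - 1) :
    phiW k [a] = [k * (a / k), a + 1] := by
  simp [phiW, h]

theorem mod_eq_zero_of_mem_head?_phiW (hk : 0 < k) (w : List ℕ) :
    ∀ b ∈ (phiW k w).head?, b % k = 0 := by
  cases w with
  | nil => simp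
  | cons a w =>
    rw [phiW_cons]
    by_cases ha : a % k = k - 1
    · simpa [phiW_singleton_of_mod_eq ha] using (succ_mod_eq_zero_iff hk).2 ha
    · simp [phiW_singleton_of_mod_ne ha]

theorem mod_eq_pred_of_phiW_eq_succ_cons (hk : 0 < k) {w y : List ℕ} {a : ℕ}
    (h : phiW k w = (a + 1) :: y) : a % k = k - 1 :=
  (succ_mod_eq_zero_iff hk).1 (mod_eq_zero_of_mem_head?_phiW hk w (a + 1) (by simp [h]))

theorem exists_eq_append_of_phiW_eq_append (hk : 0 < k) {w x y : List ℕ}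
    (h : phiW k w = x ++ y) (hy : ∀ b ∈ y.head?, b % k = 0) :
    ∃ p v, w = p ++ v ∧ phiW k p = x ∧ phiW k v = y := by
  induction w generalizing x with
  | nil =>
    obtain ⟨rfl, rfl⟩ := List.append_eq_nil_iff.1 h.symm
    exact ⟨[], [], rfl, rfl, rfl⟩
  | cons a w ih =>
    rcases x with _ | ⟨x₀, x⟩
    · exact ⟨[], a :: w, rfl, rfl, h⟩
    rw [phiW_cons] at h
    by_cases ha : a % k = k - 1
    · rw [phiW_singleton_of_mod_eq ha] at h
      simp only [List.cons_append, List.nil_append, List.cons.injEq] at h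
      obtain ⟨rfl, h⟩ := h
      obtain ⟨p, v, rfl, rfl, hv⟩ := ih h
      exact ⟨a :: p, v, rfl, by rw [phiW_cons, phiW_singleton_of_mod_eq ha]; rfl, hv⟩
    · rw [phiW_singleton_of_mod_ne ha] at h
      rcases x with _ | ⟨x₁, x⟩
      · simp only [List.cons_append, List.nil_append, List.cons.injEq] at h
        have := hy (a + 1) (by simp [← h.2])
        exact absurd ((succ_mod_eq_zero_iff hk).1 this) ha
      simp only [List.cons_append, List.nil_append, List.cons.injEq] at h
      obtain ⟨rfl, rfl, h⟩ := h
      obtain ⟨p, v, rfl, rfl, hv⟩ := ih h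
      exact ⟨a :: p, v, rfl, by rw [phiW_cons, phiW_singleton_of_mod_ne ha]; rfl, hv⟩

@[simp] theorem phiW_eq_nil_iff {w : List ℕ} : phiW k w = [] ↔ w = [] := by
  cases w with
  | nil => simp
  | cons a w => by_cases ha : a % k = k - 1 <;> simp [phiW, ha]

theorem phiW_injective (hk : 0 < k) : Function.Injective (phiW k) := by
  intro u
  induction u with
  | nil => exact fun u' h => (phiW_eq_nil_iff.1 h.symm).symm
  | cons a u ih =>
    rintro (_ | ⟨b, u'⟩) h
    · exact absurd (phiW_eq_nil_iff.1 h) (List.cons_ne_nil a u)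
    rw [phiW_cons a u, phiW_cons b u'] at h
    by_cases ha : a % k = k - 1 <;> by_cases hb : b % k = k - 1
    · simp [phiW_singleton_of_mod_eq ha, phiW_singleton_of_mod_eq hb] at h
      rw [h.1, ih h.2]
    · simp [phiW_singleton_of_mod_eq ha, phiW_singleton_of_mod_ne hb] at h
      exact absurd (mod_eq_pred_of_phiW_eq_succ_cons hk h.2) hb
    · simp [phiW_singleton_of_mod_ne ha, phiW_singleton_of_mod_eq hb] at h
      exact absurd (mod_eq_pred_of_phiW_eq_succ_cons hk h.2.symm) ha
    · simp [phiW_singleton_of_mod_ne ha, phiW_singleton_of_mod_ne hb] at h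
      rw [h.2.1, ih h.2.2]

theorem getLast?_phiW_singleton (a : ℕ) : (phiW k [a]).getLast? = some (a + 1) := by
  by_cases ha : a % k = k - 1 <;> simp [phiW, ha]

theorem exists_eq_concat_of_phiW_eq_concat {p x : List ℕ} {c : ℕ} (h : phiW k p = x ++ [c]) :
    ∃ p' c', p = p' ++ [c'] ∧ c = c' + 1 := by
  rcases List.eq_nil_or_concat p with rfl | ⟨p', c', rfl⟩
  · simp at h
  · have := congrArg List.getLast? h
    rw [List.concat_eq_append, phiW_append, List.getLast?_append, getLast?_phiW_singleton] at this
    exact ⟨p', c', List.concat_eq_append .., by simpa using this.symm⟩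

theorem exists_cons_infix_of_cons_phiW_infix (hk : 0 < k) {w u y : List ℕ} {a c : ℕ}
    (ha : a % k = 0) (h : c :: (phiW k u ++ a :: y) <:+: phiW k w) :
    ∃ c' v, c = c' + 1 ∧ c' :: (u ++ v) <:+: w ∧ a :: y <+: phiW k v := by
  obtain ⟨x, s, hxs⟩ := h
  obtain ⟨p₀, v, rfl, hp₀, hv⟩ := exists_eq_append_of_phiW_eq_append hk
    (x := x ++ c :: phiW k u) (y := a :: (y ++ s)) (by rw [← hxs]; simp) (by simpa using ha)
  obtain ⟨p₁, u', rfl, hp₁, hu'⟩ := exists_eq_append_of_phiW_eq_append hk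
    (x := x ++ [c]) (y := phiW k u) (by rw [hp₀]; simp) (mod_eq_zero_of_mem_head?_phiW hk u)
  obtain rfl := phiW_injective hk hu'
  obtain ⟨p, c', rfl, rfl⟩ := exists_eq_concat_of_phiW_eq_concat hp₁
  exact ⟨c', v, rfl, ⟨p, [], by simp⟩, ⟨s, by simp [hv]⟩⟩

theorem exists_lt_of_zero_cons_prefix_phiW (hk : 0 < k) {v y : List ℕ}
    (h : 0 :: y <+: phiW k v) :
    ∃ e v', v = e :: v' ∧ e + 1 < k ∧ y <+: (e + 1) :: phiW k v' := by
  obtain ⟨s, hs⟩ := h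
  rcases v with _ | ⟨e, v'⟩
  · simp at hs
  rw [phiW_cons] at hs
  by_cases he : e % k = k - 1
  · simp [phiW_singleton_of_mod_eq he] at hs
  · simp [phiW_singleton_of_mod_ne he] at hs
    have he' : e < k := hs.1.resolve_left (by omega)
    rw [Nat.mod_eq_of_lt he'] at he
    exact ⟨e, v', rfl, by omega, ⟨s, hs.2⟩⟩

theorem exists_eq_cons_of_phiW_singleton_prefix_phiW (hk : 0 < k) {a : ℕ} {v : List ℕ}
    (ha : a % k ≠ k - 1) (h : phiW k [a] <+: phiW k v) : ∃ v', v = a :: v' := by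
  obtain ⟨s, hs⟩ := h
  rcases v with _ | ⟨e, v'⟩
  · simp at hs
  rw [phiW_singleton_of_mod_ne ha, phiW_cons e v'] at hs
  by_cases he : e % k = k - 1
  · simp [phiW_singleton_of_mod_eq he] at hs
    exact absurd (mod_eq_pred_of_phiW_eq_succ_cons hk hs.2.symm) ha
  · simp [phiW_singleton_of_mod_ne he] at hs
    exact ⟨v', by rw [hs.2.1]⟩

theorem W_zero : W k 0 = [0] := rfl

theorem W_succ (n : ℕ) : W k (n + 1) = phiW k (W k n) := Function.iterate_succ_apply' _ _ _

theorem getLast?_W (n : ℕ) : (W k n).getLast? = some n := by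
  induction n with
  | zero => rfl
  | succ n ih =>
    rw [W_succ, ← List.dropLast_append_getLast? n ih, phiW_append, List.getLast?_append,
      getLast?_phiW_singleton]
    rfl

theorem dropLast_append_W (n : ℕ) : (W k n).dropLast ++ [n] = W k n :=
  List.dropLast_append_getLast? n (getLast?_W n)

theorem dropLast_W_succ (n : ℕ) :
    (W k (n + 1)).dropLast = phiW k (W k n).dropLast ++ (phiW k [n]).dropLast := by
  conv_lhs => rw [W_succ, ← dropLast_append_W n]
  rw [phiW_append, List.dropLast_append_of_ne_nil (by simp)]

theorem dropLast_W_succ_of_mod_eq {n : ℕ} (h : n % k = k - 1) :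
    (W k (n + 1)).dropLast = phiW k (W k n).dropLast := by
  simp [dropLast_W_succ, phiW_singleton_of_mod_eq h]

theorem dropLast_W_succ_of_mod_ne {n : ℕ} (h : n % k ≠ k - 1) :
    (W k (n + 1)).dropLast = phiW k (W k n).dropLast ++ [k * (n / k)] := by
  simp [dropLast_W_succ, phiW_singleton_of_mod_ne h]

theorem exists_cons_infix_W_of_cons_phiW_infix_W (hk : 0 < k) {n : ℕ} {u y : List ℕ} {a c : ℕ}
    (ha : a % k = 0) (h : c :: (phiW k u ++ a :: y) <:+: W k n) :
    ∃ m c' v, c = c' + 1 ∧ c' :: (u ++ v) <:+: W k m ∧ a :: y <+: phiW k v := by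
  cases n with
  | zero => simpa [W_zero] using h.length_le
  | succ m =>
    rw [W_succ] at h
    obtain ⟨c', v, hc, hinf, hpre⟩ := exists_cons_infix_of_cons_phiW_infix hk ha h
    exact ⟨m, c', v, hc, hinf, hpre⟩

theorem not_cons_dropLast_W_append_infix {i : ℕ} (hi : i + 2 ≤ k) {n c b : ℕ}
    (hc : c ≤ i) (hb : b ≤ i) : ¬ c :: ((W k i).dropLast ++ [b]) <:+: W k n := by
  induction i generalizing n c b with
  | zero =>
    intro h
    obtain rfl : c = 0 := by omega
    obtain rfl : b = 0 := by omega
    obtain ⟨m, c', v, hc', -⟩ := exists_cons_infix_W_of_cons_phiW_infix_W (u := []) (y := [])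
      (by omega) (Nat.zero_mod k) (by simpa [W_zero] using h)
    omega
  | succ j ih =>
    intro h
    have hj : j % k ≠ k - 1 := by rw [Nat.mod_eq_of_lt (by omega)]; omega
    rw [dropLast_W_succ_of_mod_ne hj, Nat.div_eq_of_lt (by omega), mul_zero,
      List.append_assoc] at h
    obtain ⟨m, c', v, rfl, hinf, hpre⟩ :=
      exists_cons_infix_W_of_cons_phiW_infix_W (by omega) (Nat.zero_mod k) h
    obtain ⟨e, v', rfl, he, hbe⟩ := exists_lt_of_zero_cons_prefix_phiW (by omega) hpre
    obtain rfl : b = e + 1 := by simpa using hbe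
    have hpre' : c' :: ((W k j).dropLast ++ [e]) <+: c' :: ((W k j).dropLast ++ e :: v') :=
      ⟨v', by simp⟩
    exact ih (by omega) (by omega) (by omega) (hpre'.isInfix.trans hinf)

theorem not_cons_dropLast_W_infix (hk : 1 < k) {i : ℕ} (hi : k - 1 ≤ i) {n c : ℕ}
    (hc : c ≤ i) : ¬ c :: (W k i).dropLast <:+: W k n := by
  induction i, hi using Nat.le_induction generalizing n c with
  | base =>
    intro h
    have hmod : (k - 2) % k ≠ k - 1 := by rw [Nat.mod_eq_of_lt (by omega)]; omega
    rw [show k - 1 = k - 2 + 1 by omega, dropLast_W_succ_of_mod_ne hmod,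
      Nat.div_eq_of_lt (by omega), mul_zero] at h
    obtain ⟨m, c', v, rfl, hinf, hpre⟩ :=
      exists_cons_infix_W_of_cons_phiW_infix_W (y := []) (by omega) (Nat.zero_mod k) h
    obtain ⟨e, v', rfl, he, -⟩ := exists_lt_of_zero_cons_prefix_phiW (by omega) hpre
    have hpre' : c' :: ((W k (k - 2)).dropLast ++ [e]) <+:
        c' :: ((W k (k - 2)).dropLast ++ e :: v') := ⟨v', by simp⟩
    exact not_cons_dropLast_W_append_infix (by omega) (by omega) (show e ≤ k - 2 by omega)
      (hpre'.isInfix.trans hinf)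
  | succ i hi ih =>
    intro h
    by_cases hi' : i % k = k - 1
    · obtain ⟨j, rfl⟩ : ∃ j, i = j + 1 := ⟨i - 1, by omega⟩
      have hj : j % k ≠ k - 1 := fun hj => by
        have := (succ_mod_eq_zero_iff (by omega)).2 hj
        omega
      set q := k * (j / k)
      have hq : q % k = 0 := Nat.mul_mod_right _ _
      have hq' : q % k ≠ k - 1 := by omega
      have hφq : phiW k [q] = [q, q + 1] := by
        rw [phiW_singleton_of_mod_ne hq', Nat.mul_div_cancel' (Nat.dvd_of_mod_eq_zero hq)]
      -- `D (j + 2)` ends with the whole two-letter block `phiW k [q]`, so its end is a cut.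
      rw [dropLast_W_succ_of_mod_eq hi', dropLast_W_succ_of_mod_ne hj, phiW_append, hφq] at h
      obtain ⟨m, c', v, rfl, hinf, hpre⟩ :=
        exists_cons_infix_W_of_cons_phiW_infix_W (by omega) hq h
      obtain ⟨v', rfl⟩ :=
        exists_eq_cons_of_phiW_singleton_prefix_phiW (by omega) hq' (hφq ▸ hpre)
      have hpre' :
          c' :: (W k (j + 1)).dropLast <+: c' :: (phiW k (W k j).dropLast ++ q :: v') := by
        rw [dropLast_W_succ_of_mod_ne hj]
        exact ⟨v', by simp [q]⟩
      exact ih (by omega) (hpre'.isInfix.trans hinf)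
    · rw [dropLast_W_succ_of_mod_ne hi'] at h
      obtain ⟨m, c', v, rfl, hinf, -⟩ :=
        exists_cons_infix_W_of_cons_phiW_infix_W (y := []) (by omega) (Nat.mul_mod_right _ _) h
      exact ih (by omega) ((List.prefix_append (c' :: _) v).isInfix.trans hinf)

end KBonacci

theorem no_WiWi_factor_general (k i n : ℕ) (hk : 2 < k) :
    ¬ (W k i ++ W k i) <:+: W k n := by
  intro h
  have hsq : i :: ((W k i).dropLast ++ [i]) <:+: W k i ++ W k i :=
    ⟨(W k i).dropLast, [], by
      conv_rhs => rw [← KBonacci.dropLast_append_W i]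
      simp⟩
  rcases le_or_gt (i + 2) k with hi | hi
  · exact KBonacci.not_cons_dropLast_W_append_infix hi le_rfl le_rfl (hsq.trans h)
  · exact KBonacci.not_cons_dropLast_W_infix (by omega) (by omega) le_rfl
      ((List.prefix_append _ _).isInfix.trans (hsq.trans h))

theorem no_WiWi_factor (k i n : ℕ) (hk : 2 < k) (hi : i < n) (hn : k + 1 ≤ n) :
    ¬ (W k i ++ W k i) <:+: W k n :=
  no_WiWi_factor_general k i n hk
end
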